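/- Let m ≥ 1 and let F_m = (1/√m)·Σ_{j,k∈Fin m} e^{2πi·jk/m}·|j⟩⟨k| be the discrete Fourier transform on ℂ^m. Then for every n ≥ 1 and every tuple (a_1,…,a_n) ∈ (Fin m)^n, P_{a_1}·F_m · P_{a_2}·F_m ⋯ P_{a_n}·F_m |s⟩ = (δ_{a_n, 0} / m^{(n−1)/2}) · exp(2πi·(a_1·a_2 + a_2·a_3 + ⋯ + a_{n−1}·a_n)/m) · |a_1⟩, where indices a_j ∈ Fin m are identified with the integers 0,1,…,m−1 and a_j·a_{j+1} is the integer product. -/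

import Mathlib

noncomputable section

open scoped BigOperators
open Real

/-- The complex Euclidean space `ℂ^m`. -/
abbrev H (m : ℕ) := EuclideanSpace ℂ (Fin m)

/-- The computational orthonormal basis vector `|a⟩`. -/
def ket {m : ℕ} (a : Fin m) : H m := EuclideanSpace.single a 1

/-- The uniform superposition `|s⟩ = (1/√m) Σ_a |a⟩`. -/
def ketS (m : ℕ) : H m := ((Real.sqrt m : ℂ))⁻¹ • ∑ a : Fin m, ket a

/-- The outer product `|x⟩⟨y|`, i.e. `v ↦ ⟪y, v⟫ • x`. -/
def outer {m : ℕ} (x y : H m) : H m →L[ℂ] H m := (innerSL ℂ y).smulRight x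

/-- The projection `P_a = |a⟩⟨a|`. -/
def P {m : ℕ} (a : Fin m) : H m →L[ℂ] H m := outer (ket a) (ket a)

/-- The discrete Fourier transform `F_m = (1/√m) Σ_{j,k} e^{2πi jk/m} |j⟩⟨k|`. -/
def fourierCoin (m : ℕ) : H m →L[ℂ] H m :=
  ((Real.sqrt m : ℂ))⁻¹ •
    ∑ j : Fin m, ∑ k : Fin m,
      Complex.exp (2 * (π : ℂ) * Complex.I * ((j : ℕ) : ℂ) * ((k : ℕ) : ℂ) / m) •
        outer (ket j) (ket k)

/-!
Since `P_a F_m |b⟩ = (e^{2πi ab/m} / √m) |a⟩`, each factor `P_{a_j} F_m` maps `|a_{j+1}⟩` to a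
multiple of `|a_j⟩`, so the product collapses to a scalar multiple of `|a_1⟩` accumulating one
phase `e^{2πi a_j a_{j+1}/m}` and one factor `1/√m` per step. The innermost factor sees `|s⟩`,
and `F_m |s⟩ = |0⟩` by the orthogonality of characters: `Σ_b e^{2πi ab/m}` is a geometric sum of
roots of unity, equal to `m` if `m ∣ a` and to `0` otherwise.
-/

open scoped InnerProductSpace
open Complex

theorem Fin.sum_dite_add_one_lt {M : Type*} [AddCommMonoid M] (k : ℕ)
    (g : Fin (k + 1) → Fin (k + 1) → M) :
    (∑ j : Fin (k + 1), if h : (j : ℕ) + 1 < k + 1 then g j ⟨j + 1, h⟩ else 0) =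
      ∑ j : Fin k, g j.castSucc j.succ := by
  rw [Fin.sum_univ_castSucc]
  simp [Fin.succ]

theorem inner_ket_ket {m : ℕ} (a b : Fin m) : ⟪ket a, ket b⟫_ℂ = if a = b then 1 else 0 := by
  simp [ket, EuclideanSpace.inner_single_left]

theorem P_apply {m : ℕ} (a : Fin m) (v : H m) : P a v = ⟪ket a, v⟫_ℂ • ket a := rfl

theorem fourierCoin_apply_ket {m : ℕ} (b : Fin m) :
    fourierCoin m (ket b) =
      ((√m : ℝ) : ℂ)⁻¹ • ∑ j : Fin m, exp (2 * π * I * (j : ℕ) * (b : ℕ) / m) • ket j := by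
  simp only [fourierCoin, smul_apply, _root_.sum_apply, outer, ContinuousLinearMap.smulRight_apply,
    innerSL_apply_apply, inner_ket_ket, ite_smul, one_smul, zero_smul, smul_ite, smul_zero,
    Finset.sum_ite_eq', Finset.mem_univ, if_true]

theorem P_mul_fourierCoin_apply_ket {m : ℕ} (a b : Fin m) :
    (P a * fourierCoin m) (ket b) =
      (((√m : ℝ) : ℂ)⁻¹ * exp (2 * π * I * (a : ℕ) * (b : ℕ) / m)) • ket a := by
  simp only [mul_apply_eq_comp, fourierCoin_apply_ket, P_apply, inner_smul_right, inner_sum,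
    inner_ket_ket, mul_ite, mul_one, mul_zero, Finset.sum_ite_eq, Finset.mem_univ, if_true]

theorem sum_exp_two_pi_I_mul_div (m a : ℕ) :
    ∑ b : Fin m, exp (2 * π * I * a * (b : ℕ) / m) = if m ∣ a then (m : ℂ) else 0 := by
  rcases Nat.eq_zero_or_pos m with rfl | hm
  · simp
  have hζ := isPrimitiveRoot_exp m hm.ne'
  set ζ := exp (2 * π * I / m)
  have hpow (b : ℕ) : exp (2 * π * I * a * b / m) = (ζ ^ a) ^ b := by
    rw [← Complex.exp_nat_mul, ← Complex.exp_nat_mul]; ring_nf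
  simp only [hpow]
  rw [Fin.sum_univ_eq_sum_range (fun b => (ζ ^ a) ^ b)]
  split_ifs with hdvd
  · simp [(hζ.pow_eq_one_iff_dvd a).2 hdvd]
  · rw [geom_sum_eq (mt (hζ.pow_eq_one_iff_dvd a).1 hdvd), ← pow_mul, mul_comm, pow_mul,
      hζ.pow_eq_one, one_pow, sub_self, zero_div]

theorem P_mul_fourierCoin_apply_ketS {m : ℕ} (a : Fin m) :
    (P a * fourierCoin m) (ketS m) = (if (a : ℕ) = 0 then (1 : ℂ) else 0) • ket a := by
  have hm : ((√m : ℝ) : ℂ) ≠ 0 := by simpa using a.pos.ne'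
  have hdvd : m ∣ (a : ℕ) ↔ (a : ℕ) = 0 :=
    ⟨fun h => Nat.eq_zero_of_dvd_of_lt h a.isLt, fun h => h ▸ dvd_zero m⟩
  simp only [ketS, map_smul, map_sum, P_mul_fourierCoin_apply_ket, ← Finset.sum_smul,
    ← Finset.mul_sum, sum_exp_two_pi_I_mul_div, hdvd, smul_smul]
  congr 1
  split_ifs
  · have hsq : ((√m : ℝ) : ℂ) ^ 2 = m := by
      rw [← ofReal_pow, Real.sq_sqrt m.cast_nonneg, ofReal_natCast]
    rw [← hsq]
    field_simp
  · simp

theorem prod_P_mul_fourierCoin_apply_ketS {m : ℕ} (n : ℕ) (a : Fin (n + 1) → Fin m) :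
    (List.ofFn fun j => P (a j) * fourierCoin m).prod (ketS m) =
      ((if (a (Fin.last n) : ℕ) = 0 then 1 else 0) / ((√m : ℝ) : ℂ) ^ n *
        exp (2 * π * I * (∑ j : Fin n, ((a j.castSucc : ℕ) : ℂ) * (a j.succ : ℕ)) / m)) •
        ket (a 0) := by
  induction n with
  | zero =>
    rw [List.ofFn_succ, List.ofFn_zero, List.prod_cons, List.prod_nil, mul_one,
      P_mul_fourierCoin_apply_ketS]
    simp
  | succ n ih =>
    have hm : ((√m : ℝ) : ℂ) ≠ 0 := by simpa using (a 0).pos.ne'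
    rw [List.ofFn_succ, List.prod_cons, mul_apply_eq_comp, ih, map_smul,
      P_mul_fourierCoin_apply_ket, smul_smul, Fin.sum_univ_succ]
    congr 1
    simp only [Fin.succ_last, Fin.castSucc_zero, ← Fin.succ_castSucc, mul_add, add_div,
      Complex.exp_add]
    field_simp
    ring

/-- Lemma 5 of the paper: for every tuple `(a_1, …, a_n)`,
`P_{a_1} F_m ⋯ P_{a_n} F_m |s⟩
  = (δ_{a_n,0} / m^{(n-1)/2}) e^{2πi (a_1 a_2 + ⋯ + a_{n-1} a_n)/m} |a_1⟩`,
where indices in `Fin m` are identified with the integers `0, …, m-1`. -/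
theorem fourier_proj_prod_ketS (m : ℕ) (n : ℕ) (hn : 1 ≤ n)
    (a : Fin n → Fin m) :
    (List.ofFn (fun j : Fin n => P (a j) * fourierCoin m)).prod (ketS m)
      = (((if (a ⟨n - 1, by omega⟩ : ℕ) = 0 then 1 else 0) /
            ((Real.sqrt m : ℂ)) ^ (n - 1)) *
          Complex.exp (2 * (π : ℂ) * Complex.I *
            (∑ j : Fin n, if h : (j : ℕ) + 1 < n then
              (((a j : ℕ) : ℂ) * ((a ⟨(j : ℕ) + 1, h⟩ : ℕ) : ℂ)) else 0) / m)) •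
          ket (a ⟨0, by omega⟩) := by
  obtain ⟨k, rfl⟩ : ∃ k, n = k + 1 := ⟨n - 1, by omega⟩
  rw [prod_P_mul_fourierCoin_apply_ketS,
    Fin.sum_dite_add_one_lt k fun i j => ((a i : ℕ) : ℂ) * ((a j : ℕ) : ℂ)]
  -- `k + 1 - 1` reduces to `k`, and `⟨k, _⟩`, `⟨0, _⟩` are `Fin.last k` and `0`
  rfl
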